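/- Let B be a skew brace of periodic nilpotent type and π a set of primes; let B_π and B_{π'} denote the Hall π- and π'-subgroups of the nilpotent periodic group (B,+), which are strong left ideals. Then the following are equivalent: (1) B_{π'} ∗ B_π = {0}; (2) B_{π'} is an ideal of B; (3) G(B_{π'}) is normal in G(B). -/

import Mathlib

/-- A skew (left) brace: a type with an additive group structure `(B,+)` and a
multiplicative group structure `(B,∘)` (written `*`), satisfying the skew left
distributive law `a ∘ (b + c) = a ∘ b − a + a ∘ c`.  Addition is not assumed
commutative. -/
class SkewBrace (B : Type*) extends AddGroup B, Group B where
  skew_mul_add : ∀ a b c : B, a * (b + c) = a * b + -a + a * c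


namespace SkewBraceAux

open scoped commutatorElement

private def torSub (G : Type*) [Group G] (n : ℕ) : Subgroup G where
  carrier := {g | g ∈ Subgroup.center G ∧ g ^ n = 1}
  one_mem' := ⟨Subgroup.one_mem _, one_pow n⟩
  mul_mem' := by
    rintro a b ⟨ha, ha'⟩ ⟨hb, hb'⟩
    refine ⟨Subgroup.mul_mem _ ha hb, ?_⟩
    have hc : Commute a b := ((Subgroup.mem_center_iff.mp ha b) : Commute b a).symm
    rw [hc.mul_pow, ha', hb', one_mul]
  inv_mem' := by
    rintro a ⟨ha, ha'⟩
    exact ⟨Subgroup.inv_mem _ ha, by rw [inv_pow, ha', inv_one]⟩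

private theorem lcs_le_map {G H : Type*} [Group G] [Group H] (f : G →* H)
    (hf : Function.Surjective f) (n : ℕ) :
    (⊤ : Subgroup H).lowerCentralSeries n ≤ Subgroup.map f ((⊤ : Subgroup G).lowerCentralSeries n) := by
  induction n with
  | zero =>
    intro h _
    obtain ⟨g, rfl⟩ := hf h
    exact ⟨g, Subgroup.mem_top g, rfl⟩
  | succ n ih =>
    rw [lowerCentralSeries_succ]
    apply (Subgroup.closure_le _).mpr
    rintro x ⟨p, hp, q, -, rfl⟩
    obtain ⟨p', hp', rfl⟩ := ih hp
    obtain ⟨q', rfl⟩ := hf q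
    refine ⟨p' * q' * p'⁻¹ * q'⁻¹, ?_, by simp [commutatorElement_def]⟩
    show _ ∈ (⊤ : Subgroup G).lowerCentralSeries (n + 1)
    exact Subgroup.commutator_mem_commutator hp' (Subgroup.mem_top q')

private theorem key_torsion (c : ℕ) : ∀ (G : Type*) [Group G] (x y : G) (n : ℕ),
    Subgroup.closure {x, y} = ⊤ → x ^ n = 1 → y ^ n = 1 →
    (⊤ : Subgroup G).lowerCentralSeries c = ⊥ → ∀ h : G, h ^ n ^ c = 1 := by
  induction c with
  | zero =>
    intro G _ x y n hclo hx hy hlcs h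
    have : h ∈ (⊥ : Subgroup G) := hlcs ▸ Subgroup.mem_top h
    rw [Subgroup.mem_bot] at this
    simp [this]
  | succ c ih =>
    intro G _ x y n hclo hx hy hlcs h
    set N := (⊤ : Subgroup G).lowerCentralSeries c with hN
    have hcomm : ⁅N, (⊤ : Subgroup G)⁆ = ⊥ := hlcs
    have hNc : N ≤ Subgroup.center G := by
      intro g hg
      rw [Subgroup.mem_center_iff]
      intro b
      have h1 : ⁅g, b⁆ ∈ (⊥ : Subgroup G) :=
        hcomm ▸ Subgroup.commutator_mem_commutator hg (Subgroup.mem_top b)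
      rw [Subgroup.mem_bot, commutatorElement_eq_one_iff_mul_comm] at h1
      exact h1.symm
    have hNtor : ∀ z ∈ N, z ^ n = 1 := by
      cases c with
      | zero =>
        have hNt : N = ⊤ := rfl
        have hcen : ∀ g : G, g ∈ Subgroup.center G := fun g => hNc (hNt ▸ Subgroup.mem_top g)
        have hle : Subgroup.closure {x, y} ≤ torSub G n := by
          apply (Subgroup.closure_le _).mpr
          rintro g (rfl | rfl)
          · exact ⟨hcen _, hx⟩
          · exact ⟨hcen _, hy⟩
        intro z _
        exact (hle (hclo.symm ▸ Subgroup.mem_top z)).2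
      | succ d =>
        have hNd : N = ⁅(⊤ : Subgroup G).lowerCentralSeries d, (⊤ : Subgroup G)⁆ := rfl
        have hle : ⁅(⊤ : Subgroup G).lowerCentralSeries d, (⊤ : Subgroup G)⁆ ≤ torSub G n := by
          rw [Subgroup.commutator_le]
          intro a ha g _
          have hcen : ∀ b : G, ⁅a, b⁆ ∈ Subgroup.center G := fun b =>
            hNc (hNd ▸ Subgroup.commutator_mem_commutator ha (Subgroup.mem_top b))
          set φ : G →* G := MonoidHom.mk' (fun b => ⁅a, b⁆) (by
            intro b₁ b₂
            have h2 := Subgroup.mem_center_iff.mp (hcen b₂)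
            have key : ⁅a, b₁ * b₂⁆ = ⁅a, b₁⁆ * (b₁ * ⁅a, b₂⁆ * b₁⁻¹) := by
              simp only [commutatorElement_def]; group
            show ⁅a, b₁ * b₂⁆ = ⁅a, b₁⁆ * ⁅a, b₂⁆
            rw [key, h2 b₁]
            group) with hφ
          have himg : φ g ∈ Subgroup.closure {φ x, φ y} := by
            have hg : g ∈ Subgroup.closure {x, y} := hclo.symm ▸ Subgroup.mem_top g
            have := Subgroup.mem_map_of_mem φ hg
            rwa [MonoidHom.map_closure, Set.image_pair] at this
          have hle2 : Subgroup.closure {φ x, φ y} ≤ torSub G n := by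
            apply (Subgroup.closure_le _).mpr
            rintro g' (rfl | rfl)
            · exact ⟨hcen x, by rw [← map_pow, hx, map_one]⟩
            · exact ⟨hcen y, by rw [← map_pow, hy, map_one]⟩
          exact hle2 himg
        intro z hz
        exact (hle (hNd ▸ hz)).2
    have hsurj : Function.Surjective (QuotientGroup.mk' N) := QuotientGroup.mk'_surjective N
    have hclo' : Subgroup.closure {QuotientGroup.mk' N x, QuotientGroup.mk' N y} = ⊤ := by
      rw [← Set.image_pair, ← MonoidHom.map_closure, hclo]
      exact Subgroup.map_top_of_surjective _ hsurj
    have hlcs' : (⊤ : Subgroup (G ⧸ N)).lowerCentralSeries c = ⊥ := by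
      rw [eq_bot_iff]
      refine le_trans (lcs_le_map (QuotientGroup.mk' N) hsurj c) ?_
      rintro g ⟨g', hg', rfl⟩
      rw [Subgroup.mem_bot]
      exact (QuotientGroup.eq_one_iff g').mpr hg'
    have hq := ih (G ⧸ N) (QuotientGroup.mk' N x) (QuotientGroup.mk' N y) n hclo'
      (by rw [← map_pow, hx, map_one]) (by rw [← map_pow, hy, map_one]) hlcs'
    have hz : h ^ n ^ c ∈ N := by
      have := hq (QuotientGroup.mk' N h)
      rw [← map_pow] at this
      exact (QuotientGroup.eq_one_iff _).mp this
    calc h ^ n ^ (c + 1) = (h ^ n ^ c) ^ n := by rw [← pow_mul, pow_succ]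
    _ = 1 := hNtor _ hz

end SkewBraceAux

namespace SkewBrace

variable {B : Type*} [SkewBrace B]

/-- `lam a x = −a + a ∘ x`, the lambda map of a skew brace. -/
def lam (a x : B) : B := -a + a * x

/-- The star operation `a ∗ b = λ_a(b) − b = −a + a ∘ b − b`. -/
def sstar (a b : B) : B := -a + a * b + -b

/-- A sub-skew-brace: a subset closed under both group operations and inverses. -/
def IsSubSkewBrace (C : Set B) : Prop :=
  (0 : B) ∈ C ∧ (∀ a ∈ C, ∀ b ∈ C, a + b ∈ C) ∧ (∀ a ∈ C, -a ∈ C) ∧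
    (∀ a ∈ C, ∀ b ∈ C, a * b ∈ C) ∧ (∀ a ∈ C, a⁻¹ ∈ C)

/-- A subgroup of the additive group `(B,+)`, as a subset. -/
def IsAddSubgroup (S : Set B) : Prop :=
  (0 : B) ∈ S ∧ (∀ a ∈ S, ∀ b ∈ S, a + b ∈ S) ∧ (∀ a ∈ S, -a ∈ S)

/-- A subgroup of the multiplicative group `(B,∘)`, as a subset. -/
def IsMulSubgroup (S : Set B) : Prop :=
  (1 : B) ∈ S ∧ (∀ a ∈ S, ∀ b ∈ S, a * b ∈ S) ∧ (∀ a ∈ S, a⁻¹ ∈ S)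

/-- A strong left ideal: an additively normal, `λ`-invariant additive subgroup. -/
def IsStrongLeftIdeal (J : Set B) : Prop :=
  IsAddSubgroup J ∧ (∀ b : B, ∀ j ∈ J, b + j + -b ∈ J) ∧ (∀ b : B, ∀ j ∈ J, lam b j ∈ J)

/-- An ideal: a sub-skew-brace which is additively normal, `λ`-invariant and
multiplicatively normal. -/
def IsIdeal (I : Set B) : Prop :=
  IsSubSkewBrace I ∧ (∀ b : B, ∀ a ∈ I, b + a + -b ∈ I) ∧
    (∀ b : B, ∀ a ∈ I, lam b a ∈ I) ∧ (∀ b : B, ∀ a ∈ I, b * a * b⁻¹ ∈ I)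

/-- Multiplication of the design group `G(B) = (B,+) ⋊_λ (B,∘)`. -/
def gmul (p q : B × B) : B × B := (p.1 + lam p.2 q.1, p.2 * q.2)

/-- Inversion in the design group `G(B)`. -/
def ginv (p : B × B) : B × B := (-(lam p.2⁻¹ p.1), p.2⁻¹)

/-- For a subset `I ⊆ B`, the subset `G(I) = I × I` of the design group. -/
def designSet (I : Set B) : Set (B × B) := {p | p.1 ∈ I ∧ p.2 ∈ I}

/-- The upper central series of the additive group `(B,+)`, as sets. -/
def zAdd (B : Type*) [SkewBrace B] : ℕ → Set B
  | 0 => {0}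
  | n + 1 => {a : B | ∀ b : B, a + b + -a + -b ∈ zAdd B n}

/-- `n` is a `π`-number: positive and all its prime divisors lie in `π`. -/
def IsPiNumber (piSet : Set ℕ) (n : ℕ) : Prop :=
  0 < n ∧ ∀ p : ℕ, p.Prime → p ∣ n → p ∈ piSet

/-- The Hall `π`-subgroup of `(B,+)`: elements whose additive order is a
`π`-number. -/
def hallPart (B : Type*) [SkewBrace B] (piSet : Set ℕ) : Set B :=
  {b : B | ∃ n : ℕ, IsPiNumber piSet n ∧ n • b = 0}

private theorem mul_zero'' (a : B) : a * 0 = a := by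
  have h := skew_mul_add a 0 0
  rw [add_zero, add_assoc] at h
  exact (neg_add_eq_zero.mp (left_eq_add.mp h)).symm

private theorem one_eq_zero' : (1 : B) = 0 := by
  have h := mul_zero'' (1 : B)
  rw [one_mul] at h
  exact h.symm

private theorem lam_add' (a x y : B) : lam a (x + y) = lam a x + lam a y := by
  unfold lam
  rw [skew_mul_add]
  simp only [add_assoc]

private theorem lam_zero' (a : B) : lam a 0 = 0 := by
  unfold lam
  rw [mul_zero'', neg_add_cancel]

private theorem lam_neg' (a x : B) : lam a (-x) = -(lam a x) := by
  have h := lam_add' a x (-x)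
  rw [add_neg_cancel, lam_zero'] at h
  exact (neg_eq_of_add_eq_zero_right h.symm).symm

private theorem lam_nsmul' (a x : B) : ∀ n : ℕ, lam a (n • x) = n • lam a x
  | 0 => by rw [zero_nsmul, zero_nsmul, lam_zero']
  | n + 1 => by rw [succ_nsmul, succ_nsmul, lam_add', lam_nsmul' a x n]

private theorem mul_eq_add_lam (a x : B) : a * x = a + lam a x :=
  (add_neg_cancel_left a (a * x)).symm

private theorem lam_mul' (a b x : B) : lam (a * b) x = lam a (lam b x) := by
  have h : lam a (lam b x) = lam a (-b) + lam a (b * x) := by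
    rw [show lam b x = -b + b * x from rfl, lam_add']
  rw [h, lam_neg']
  show -(a * b) + (a * b) * x = -(-a + a * b) + (-a + a * (b * x))
  rw [neg_add_rev, neg_neg, mul_assoc a b x, add_assoc, add_neg_cancel_left]

private theorem lam_inv_self (a : B) : lam a⁻¹ a = -a⁻¹ := by
  show -a⁻¹ + a⁻¹ * a = -a⁻¹
  rw [inv_mul_cancel, one_eq_zero', add_zero]

private theorem lam_self_inv (a : B) : lam a a⁻¹ = -a := by
  show -a + a * a⁻¹ = -a
  rw [mul_inv_cancel, one_eq_zero', add_zero]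

private theorem lam_eq_sstar (a b : B) : lam a b = sstar a b + b :=
  (neg_add_cancel_right (lam a b) b).symm

private theorem conj_nsmul' (c j : B) : ∀ n : ℕ, n • (c + j + -c) = c + n • j + -c
  | 0 => by rw [zero_nsmul, zero_nsmul, add_zero, add_neg_cancel]
  | n + 1 => by
    rw [succ_nsmul, succ_nsmul, conj_nsmul' c j n]
    simp only [add_assoc, neg_add_cancel_left]

private theorem isPi_one (S : Set ℕ) : IsPiNumber S 1 :=
  ⟨one_pos, fun p hp hd => absurd (Nat.dvd_one.mp hd) hp.ne_one⟩

private theorem isPi_mul {S : Set ℕ} {m n : ℕ} (hm : IsPiNumber S m) (hn : IsPiNumber S n) :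
    IsPiNumber S (m * n) :=
  ⟨Nat.mul_pos hm.1 hn.1, fun p hp hd => ((Nat.Prime.dvd_mul hp).mp hd).elim (hm.2 p hp) (hn.2 p hp)⟩

private theorem isPi_pow {S : Set ℕ} {m : ℕ} (c : ℕ) (hm : IsPiNumber S m) :
    IsPiNumber S (m ^ c) :=
  ⟨pow_pos hm.1 c, fun p hp hd => hm.2 p hp (hp.dvd_of_dvd_pow hd)⟩

private theorem isPi_coprime {S : Set ℕ} {m n : ℕ} (hm : IsPiNumber S m)
    (hn : IsPiNumber Sᶜ n) : Nat.Coprime m n := by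
  by_contra h
  obtain ⟨p, hp, hpd⟩ := Nat.exists_prime_and_dvd h
  exact (hn.2 p hp (hpd.trans (Nat.gcd_dvd_right m n))) (hm.2 p hp (hpd.trans (Nat.gcd_dvd_left m n)))

private theorem eq_zero_of_coprime {x : B} {m n : ℕ} (hco : Nat.Coprime m n)
    (hm : m • x = 0) (hn : n • x = 0) : x = 0 := by
  obtain ⟨u, v, huv⟩ := Nat.isCoprime_iff_coprime.mpr hco
  calc x = (u * (m : ℤ) + v * (n : ℤ)) • x := by rw [huv, one_zsmul]
  _ = u • ((m : ℕ) • x) + v • ((n : ℕ) • x) := by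
      rw [add_zsmul, mul_zsmul, mul_zsmul, natCast_zsmul, natCast_zsmul]
  _ = 0 := by rw [hm, hn, zsmul_zero, zsmul_zero, add_zero]

private theorem zAdd_iff_ucs : ∀ (n : ℕ) (a : B),
    a ∈ zAdd B n ↔ Multiplicative.ofAdd a ∈ Subgroup.upperCentralSeries (Multiplicative B) n := by
  intro n
  induction n with
  | zero =>
    intro a
    rw [upperCentralSeries_zero, Subgroup.mem_bot]
    show a ∈ ({0} : Set B) ↔ _
    rw [Set.mem_singleton_iff]
    exact ⟨fun h => by rw [h, ofAdd_zero], fun h => ofAdd_eq_one.mp h⟩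
  | succ n ih =>
    intro a
    rw [mem_upperCentralSeries_succ_iff]
    show (∀ b : B, a + b + -a + -b ∈ zAdd B n) ↔ _
    constructor
    · intro h y
      exact (ih (a + y.toAdd + -a + -y.toAdd)).mp (h y.toAdd)
    · intro h b
      exact (ih (a + b + -a + -b)).mpr (h (Multiplicative.ofAdd b))

private theorem lcs_bot_of_nil (hnil : ∃ k : ℕ, zAdd B k = Set.univ) :
    ∃ c : ℕ, (⊤ : Subgroup (Multiplicative B)).lowerCentralSeries c = ⊥ := by
  obtain ⟨k, hk⟩ := hnil
  have hucs : Subgroup.upperCentralSeries (Multiplicative B) k = ⊤ := by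
    rw [eq_top_iff]
    intro g _
    have h1 : g.toAdd ∈ zAdd B k := by rw [hk]; exact Set.mem_univ _
    have h2 := (zAdd_iff_ucs k g.toAdd).mp h1
    simpa using h2
  have : Group.IsNilpotent (Multiplicative B) := ⟨⟨k, hucs⟩⟩
  exact nilpotent_iff_lowerCentralSeries.mp this

private theorem hall_zero_mem (S : Set ℕ) : (0 : B) ∈ hallPart B S :=
  ⟨1, isPi_one S, one_nsmul 0⟩

private theorem hall_neg_mem (S : Set ℕ) {b : B} (hb : b ∈ hallPart B S) :
    -b ∈ hallPart B S := by
  obtain ⟨n, hn, h⟩ := hb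
  exact ⟨n, hn, by rw [neg_nsmul, h, neg_zero]⟩

private theorem hall_conj_mem (S : Set ℕ) (c : B) {j : B} (hj : j ∈ hallPart B S) :
    c + j + -c ∈ hallPart B S := by
  obtain ⟨n, hn, h⟩ := hj
  exact ⟨n, hn, by rw [conj_nsmul', h, add_zero, add_neg_cancel]⟩

private theorem hall_lam_mem (S : Set ℕ) (b : B) {j : B} (hj : j ∈ hallPart B S) :
    lam b j ∈ hallPart B S := by
  obtain ⟨n, hn, h⟩ := hj
  exact ⟨n, hn, by rw [← lam_nsmul', h, lam_zero']⟩

private theorem hall_add_mem (S : Set ℕ) (hnil : ∃ k : ℕ, zAdd B k = Set.univ)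
    {x y : B} (hx : x ∈ hallPart B S) (hy : y ∈ hallPart B S) : x + y ∈ hallPart B S := by
  obtain ⟨m, hm, hmx⟩ := hx
  obtain ⟨n, hn, hny⟩ := hy
  obtain ⟨c, hc⟩ := lcs_bot_of_nil hnil
  refine ⟨(m * n) ^ c, isPi_pow c (isPi_mul hm hn), ?_⟩
  set X : Multiplicative B := Multiplicative.ofAdd x with hX
  set Y : Multiplicative B := Multiplicative.ofAdd y with hY
  have hXmem : X ∈ Subgroup.closure ({X, Y} : Set (Multiplicative B)) :=
    Subgroup.subset_closure (Set.mem_insert _ _)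
  have hYmem : Y ∈ Subgroup.closure ({X, Y} : Set (Multiplicative B)) :=
    Subgroup.subset_closure (Set.mem_insert_of_mem _ rfl)
  set H := Subgroup.closure ({X, Y} : Set (Multiplicative B)) with hH
  set x' : H := ⟨X, hXmem⟩ with hx'def
  set y' : H := ⟨Y, hYmem⟩ with hy'def
  have hclo : Subgroup.closure ({x', y'} : Set H) = ⊤ := by
    have h1 := Subgroup.closure_preimage_eq_top ({X, Y} : Set (Multiplicative B))
    have h2 : ((Subgroup.closure ({X, Y} : Set (Multiplicative B))).subtype ⁻¹'
        ({X, Y} : Set (Multiplicative B))) = ({x', y'} : Set H) := by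
      ext g
      simp only [Set.mem_preimage, Subgroup.coe_subtype, Set.mem_insert_iff,
        Set.mem_singleton_iff]
      constructor
      · rintro (h | h)
        · exact Or.inl (Subtype.ext h)
        · exact Or.inr (Subtype.ext h)
      · rintro (rfl | rfl)
        · exact Or.inl rfl
        · exact Or.inr rfl
    rw [h2] at h1
    exact h1
  have hlcsH : (⊤ : Subgroup H).lowerCentralSeries c = ⊥ := by
    rw [eq_bot_iff]
    intro z hz
    have h1 := lowerCentralSeries_map_subtype_le H c (Subgroup.mem_map_of_mem H.subtype hz)
    rw [hc, Subgroup.mem_bot] at h1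
    rw [Subgroup.mem_bot]
    exact Subtype.ext h1
  have hx'pow : x' ^ (m * n) = 1 := by
    apply Subtype.ext
    rw [SubmonoidClass.coe_pow]
    show X ^ (m * n) = 1
    rw [hX, ← ofAdd_nsmul, mul_nsmul, hmx, nsmul_zero, ofAdd_zero]
  have hy'pow : y' ^ (m * n) = 1 := by
    apply Subtype.ext
    rw [SubmonoidClass.coe_pow]
    show Y ^ (m * n) = 1
    rw [hY, ← ofAdd_nsmul, mul_comm m n, mul_nsmul, hny, nsmul_zero, ofAdd_zero]
  have hkey := SkewBraceAux.key_torsion c H x' y' (m * n) hclo hx'pow hy'pow hlcsH (x' * y')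
  have hval := congrArg Subtype.val hkey
  rw [SubmonoidClass.coe_pow] at hval
  have hXY : ((x' * y' : H) : Multiplicative B) = Multiplicative.ofAdd (x + y) := rfl
  rw [hXY, ← ofAdd_nsmul] at hval
  exact ofAdd_eq_one.mp hval

private theorem hall_decomp (S : Set ℕ) (hper : ∀ b : B, ∃ n : ℕ, 0 < n ∧ n • b = 0) (b : B) :
    ∃ q ∈ hallPart B Sᶜ, ∃ p ∈ hallPart B S, b = q + p := by
  classical
  obtain ⟨n, hn0, hnb⟩ := hper b
  set m : ℕ := n.factorization.prod fun p k => if p ∈ S then p ^ k else 1 with hmdef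
  set m' : ℕ := n.factorization.prod fun p k => if p ∈ S then 1 else p ^ k with hm'def
  have hmm : m * m' = n := by
    rw [hmdef, hm'def, Finsupp.prod, Finsupp.prod, ← Finset.prod_mul_distrib]
    conv_rhs => rw [← Nat.factorization_prod_pow_eq_self hn0.ne']
    rw [Finsupp.prod]
    apply Finset.prod_congr rfl
    intro p _
    by_cases h : p ∈ S <;> simp [h]
  have hmpos : 0 < m ∧ 0 < m' := by
    constructor <;> [rcases Nat.eq_zero_or_pos m with h | h; rcases Nat.eq_zero_or_pos m' with h | h]
    · rw [h, zero_mul] at hmm; omega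
    · exact h
    · rw [h, mul_zero] at hmm; omega
    · exact h
  have hm : IsPiNumber S m := by
    refine ⟨hmpos.1, ?_⟩
    intro q hq hqd
    rw [hmdef, Finsupp.prod] at hqd
    obtain ⟨p, hp, hqp⟩ := hq.prime.exists_mem_finset_dvd hqd
    have hpp : p.Prime := by
      rw [Nat.support_factorization] at hp
      exact Nat.prime_of_mem_primeFactors hp
    by_cases h : p ∈ S
    · rw [if_pos h] at hqp
      have : q = p := (Nat.prime_dvd_prime_iff_eq hq hpp).mp (hq.dvd_of_dvd_pow hqp)
      rw [this]; exact h
    · rw [if_neg h] at hqp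
      exact absurd (Nat.dvd_one.mp hqp) hq.ne_one
  have hm' : IsPiNumber Sᶜ m' := by
    refine ⟨hmpos.2, ?_⟩
    intro q hq hqd
    rw [hm'def, Finsupp.prod] at hqd
    obtain ⟨p, hp, hqp⟩ := hq.prime.exists_mem_finset_dvd hqd
    have hpp : p.Prime := by
      rw [Nat.support_factorization] at hp
      exact Nat.prime_of_mem_primeFactors hp
    by_cases h : p ∈ S
    · rw [if_pos h] at hqp
      exact absurd (Nat.dvd_one.mp hqp) hq.ne_one
    · rw [if_neg h] at hqp
      have : q = p := (Nat.prime_dvd_prime_iff_eq hq hpp).mp (hq.dvd_of_dvd_pow hqp)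
      rw [this]; exact h
  have hco : Nat.Coprime m m' := isPi_coprime hm hm'
  obtain ⟨u, v, huv⟩ := Nat.isCoprime_iff_coprime.mpr hco
  refine ⟨(u * (m : ℤ)) • b, ⟨m', hm', ?_⟩, (v * (m' : ℤ)) • b, ⟨m, hm, ?_⟩, ?_⟩
  · have h1 : (m' : ℕ) • ((u * (m : ℤ)) • b) = u • ((n : ℕ) • b) := by
      rw [← natCast_zsmul ((u * (m : ℤ)) • b) m', ← mul_zsmul, ← natCast_zsmul b n, ← mul_zsmul]
      congr 1
      rw [← hmm]
      push_cast
      ring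
    rw [h1, hnb, zsmul_zero]
  · have h1 : (m : ℕ) • ((v * (m' : ℤ)) • b) = v • ((n : ℕ) • b) := by
      rw [← natCast_zsmul ((v * (m' : ℤ)) • b) m, ← mul_zsmul, ← natCast_zsmul b n, ← mul_zsmul]
      congr 1
      rw [← hmm]
      push_cast
      ring
    rw [h1, hnb, zsmul_zero]
  · calc b = (u * (m : ℤ) + v * (m' : ℤ)) • b := by rw [huv, one_zsmul]
    _ = _ := add_zsmul b _ _


private theorem hall_mul_mem (S : Set ℕ) (hnil : ∃ k : ℕ, zAdd B k = Set.univ)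
    {a b : B} (ha : a ∈ hallPart B S) (hb : b ∈ hallPart B S) : a * b ∈ hallPart B S := by
  rw [mul_eq_add_lam]
  exact hall_add_mem S hnil ha (hall_lam_mem S a hb)

private theorem hall_inv_mem (S : Set ℕ) {a : B} (ha : a ∈ hallPart B S) :
    a⁻¹ ∈ hallPart B S := by
  have h := hall_neg_mem S (hall_lam_mem S a⁻¹ ha)
  rwa [lam_inv_self, neg_neg] at h

private theorem hall_isIdeal (S : Set ℕ) (hnil : ∃ k : ℕ, zAdd B k = Set.univ)
    (hmn : ∀ b : B, ∀ a ∈ hallPart B S, b * a * b⁻¹ ∈ hallPart B S) :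
    IsIdeal (hallPart B S) :=
  ⟨⟨hall_zero_mem S, fun a ha b hb => hall_add_mem S hnil ha hb, fun a ha => hall_neg_mem S ha,
    fun a ha b hb => hall_mul_mem S hnil ha hb, fun a ha => hall_inv_mem S ha⟩,
   fun b a ha => hall_conj_mem S b ha, fun b a ha => hall_lam_mem S b ha, hmn⟩

private theorem sstar_mem_of_ideal {I : Set B} (hI : IsIdeal I) {a : B} (ha : a ∈ I) (s : B) :
    sstar a s ∈ I := by
  have hc : s⁻¹ * a * s ∈ I := by
    have := hI.2.2.2 s⁻¹ a ha
    rwa [inv_inv] at this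
  set c := s⁻¹ * a * s with hcdef
  have hsc : a * s = s * c := by
    rw [hcdef, ← mul_assoc, ← mul_assoc, mul_inv_cancel, one_mul]
  have heq : sstar a s = -a + (s + lam s c + -s) := by
    show -a + a * s + -s = _
    rw [hsc, mul_eq_add_lam s c]
    simp only [add_assoc]
  rw [heq]
  exact hI.1.2.1 (-a) (hI.1.2.2.1 a ha) _ (hI.2.1 s _ (hI.2.2.1 s c hc))

private theorem conj_formula (b a : B) :
    b * a * b⁻¹ = b + (lam b a + lam b (sstar a b⁻¹)) + -b := by
  rw [mul_assoc, mul_eq_add_lam a b⁻¹, mul_eq_add_lam b (a + lam a b⁻¹), lam_add',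
    lam_eq_sstar a b⁻¹, lam_add', lam_self_inv b]
  simp only [add_assoc]

/-- For a skew brace of periodic nilpotent type and a set of primes `π`, the
following are equivalent: (1) `B_{π'} ∗ B_π = {0}`; (2) `B_{π'}` is an ideal;
(3) `G(B_{π'})` is normal in `G(B)`. -/
theorem hall_complement_ideal_iff (piSet : Set ℕ)
    (hper : ∀ b : B, ∃ n : ℕ, 0 < n ∧ n • b = 0)
    (hnil : ∃ k : ℕ, zAdd B k = Set.univ) :
    ((∀ a ∈ hallPart B piSetᶜ, ∀ b ∈ hallPart B piSet, sstar a b = 0) ↔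
      IsIdeal (hallPart B piSetᶜ)) ∧
    (IsIdeal (hallPart B piSetᶜ) ↔
      ∀ p : B × B, ∀ q ∈ designSet (hallPart B piSetᶜ),
        gmul (gmul p q) (ginv p) ∈ designSet (hallPart B piSetᶜ)) := by
  have hQstar : (∀ a ∈ hallPart B piSetᶜ, ∀ b ∈ hallPart B piSet, sstar a b = 0) →
      ∀ a ∈ hallPart B piSetᶜ, ∀ s : B, sstar a s ∈ hallPart B piSetᶜ := by
    intro hstar a ha s
    obtain ⟨q, hq, p, hp, hs⟩ := hall_decomp piSet hper s
    have hlamp : lam a p = p := by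
      rw [lam_eq_sstar, hstar a ha p hp, zero_add]
    have heq : sstar a s = lam a q + -q := by
      rw [hs]
      show lam a (q + p) + -(q + p) = _
      rw [lam_add', hlamp, neg_add_rev]
      simp only [add_assoc, add_neg_cancel_left]
    rw [heq]
    exact hall_add_mem _ hnil (hall_lam_mem _ a hq) (hall_neg_mem _ hq)
  constructor
  · constructor
    · intro hstar
      apply hall_isIdeal _ hnil
      intro b a ha
      rw [conj_formula]
      exact hall_conj_mem _ b (hall_add_mem _ hnil (hall_lam_mem _ b ha)
        (hall_lam_mem _ b (hQstar hstar a ha b⁻¹)))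
    · intro hI a ha b hb
      have h1 : sstar a b ∈ hallPart B piSetᶜ := sstar_mem_of_ideal hI ha b
      have h2 : sstar a b ∈ hallPart B piSet := by
        show lam a b + -b ∈ _
        exact hall_add_mem _ hnil (hall_lam_mem _ a hb) (hall_neg_mem _ hb)
      obtain ⟨m, hm, hm0⟩ := h2
      obtain ⟨n, hn, hn0⟩ := h1
      exact eq_zero_of_coprime (isPi_coprime hm hn) hm0 hn0
  · constructor
    · intro hI pr q hq
      refine ⟨?_, hI.2.2.2 pr.2 q.2 hq.2⟩
      show pr.1 + lam pr.2 q.1 + lam (pr.2 * q.2) (-(lam pr.2⁻¹ pr.1)) ∈ _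
      rw [lam_neg', ← lam_mul']
      have hu' : pr.2 * q.2 * pr.2⁻¹ ∈ hallPart B piSetᶜ := hI.2.2.2 pr.2 q.2 hq.2
      have hw : sstar (pr.2 * q.2 * pr.2⁻¹) pr.1 ∈ hallPart B piSetᶜ :=
        sstar_mem_of_ideal hI hu' pr.1
      have heq : pr.1 + lam pr.2 q.1 + -(lam (pr.2 * q.2 * pr.2⁻¹) pr.1)
          = (pr.1 + lam pr.2 q.1 + -pr.1) + -(sstar (pr.2 * q.2 * pr.2⁻¹) pr.1) := by
        rw [lam_eq_sstar (pr.2 * q.2 * pr.2⁻¹) pr.1, neg_add_rev]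
        simp only [add_assoc]
      rw [heq]
      exact hall_add_mem _ hnil (hall_conj_mem _ pr.1 (hall_lam_mem _ pr.2 hq.1))
        (hall_neg_mem _ hw)
    · intro hN
      apply hall_isIdeal _ hnil
      intro t a ha
      exact (hN (0, t) (0, a) ⟨hall_zero_mem _, ha⟩).2


end SkewBrace
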